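/- arXiv:2107.05629 — 3 statements merged into one kernel-verified Lean document; each statement's English description precedes it below -/
import Mathlib

section
/- For every natural number k and every positive integer N, the sequence of averages a_n = (1/(2(n+1))) · Σ_{j=0}^{n} (F_j^k(N + A_j) + F_{-j-1}^k(N + A_{-j-1})) (viewed as rational numbers) tends to T^k(N) as n → ∞; in fact a_n = T^k(N) for every natural number n. -/
def T (N : ℤ) : ℤ := if Even N then N / 2 else (3 * N + 1) / 2

def F (n : ℤ) (P : ℤ) : ℤ := if Even P then (3 * P - 2 * n) / 2 else (P + 2 * n + 1) / 2

def A (n : ℤ) : ℤ := 2 * n + 1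

lemma F_step (m N : ℤ) : F m (N + A m) = T N + A m := by
  unfold F T A
  rcases Int.even_or_odd N with ⟨c, hc⟩ | ⟨c, hc⟩
  · have h1 : ¬ Even (N + (2 * m + 1)) := by
      rintro ⟨d, hd⟩; omega
    rw [if_neg h1, if_pos ⟨c, hc⟩]; omega
  · have h1 : Even (N + (2 * m + 1)) := ⟨c + m + 1, by omega⟩
    have h2 : ¬ Even N := by rintro ⟨d, hd⟩; omega
    rw [if_pos h1, if_neg h2]; omega

lemma F_iter (k : ℕ) (m N : ℤ) : (F m)^[k] (N + A m) = T^[k] N + A m := by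
  induction k generalizing N with
  | zero => simp
  | succ k ih =>
    rw [Function.iterate_succ_apply, F_step, ih, Function.iterate_succ_apply]

theorem stmt_3 (k : ℕ) (N : ℤ) (hN : 0 < N) :
    Filter.Tendsto
      (fun n : ℕ => (1 / (2 * ((n : ℚ) + 1))) *
        ∑ j ∈ Finset.range (n + 1),
          (((F j)^[k] (N + A j) : ℚ) + ((F (-(j : ℤ) - 1))^[k] (N + A (-(j : ℤ) - 1)) : ℚ)))
      Filter.atTop (nhds ((T^[k] N : ℤ) : ℚ)) ∧
    ∀ n : ℕ,
      (1 / (2 * ((n : ℚ) + 1))) *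
        ∑ j ∈ Finset.range (n + 1),
          (((F j)^[k] (N + A j) : ℚ) + ((F (-(j : ℤ) - 1))^[k] (N + A (-(j : ℤ) - 1)) : ℚ)) =
      ((T^[k] N : ℤ) : ℚ) := by
  have key : ∀ n : ℕ,
      (1 / (2 * ((n : ℚ) + 1))) *
        ∑ j ∈ Finset.range (n + 1),
          (((F j)^[k] (N + A j) : ℚ) + ((F (-(j : ℤ) - 1))^[k] (N + A (-(j : ℤ) - 1)) : ℚ)) =
      ((T^[k] N : ℤ) : ℚ) := by
    intro n
    have hsum : ∀ j : ℕ,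
        (((F j)^[k] (N + A j) : ℚ) + ((F (-(j : ℤ) - 1))^[k] (N + A (-(j : ℤ) - 1)) : ℚ)) =
        2 * ((T^[k] N : ℤ) : ℚ) := by
      intro j
      rw [F_iter, F_iter]
      push_cast [A]
      ring
    rw [Finset.sum_congr rfl fun j _ => hsum j, Finset.sum_const, Finset.card_range]
    have h2 : (2 : ℚ) * ((n : ℚ) + 1) ≠ 0 := by positivity
    field_simp
    ring
  refine ⟨?_, key⟩
  simp only [key]
  exact tendsto_const_nhds
end

section
/- For all integers n and m, every natural number k, and every positive integer N, one has F_n^k(N + A_n) - F_m^k(N + A_m) = A_n - A_m; in particular this difference depends only on n and m and not on N or k. -/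
def G (N : ℤ) : ℤ := if Even N then N / 2 else (3 * N + 1) / 2

lemma G_pos {N : ℤ} (h : 0 < N) : 0 < G N := by
  unfold G
  rcases Int.even_or_odd N with he | ho
  · rw [if_pos he]; obtain ⟨a, ha⟩ := he; omega
  · rw [if_neg (Int.not_even_iff_odd.mpr ho)]; obtain ⟨a, ha⟩ := ho; omega

lemma F_key (n N : ℤ) : F n (N + A n) = G N + A n := by
  unfold F A G
  rcases Int.even_or_odd N with he | ho
  · obtain ⟨a, ha⟩ := he
    rw [if_neg (Int.not_even_iff_odd.mpr ⟨a + n, by omega⟩), if_pos ⟨a, ha⟩]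
    omega
  · obtain ⟨a, ha⟩ := ho
    rw [if_pos ⟨a + n + 1, by omega⟩, if_neg (Int.not_even_iff_odd.mpr ⟨a, ha⟩)]
    omega

lemma iter_key (n : ℤ) (k : ℕ) : ∀ N : ℤ, 0 < N →
    (F n)^[k] (N + A n) = G^[k] N + A n := by
  induction k with
  | zero => intro N _; simp
  | succ k ih =>
    intro N hN
    rw [Function.iterate_succ_apply, Function.iterate_succ_apply, F_key]
    exact ih _ (G_pos hN)

theorem stmt_5 (n m : ℤ) (k : ℕ) (N : ℤ) (hN : 0 < N) :
    (F n)^[k] (N + A n) - (F m)^[k] (N + A m) = A n - A m := by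
  rw [iter_key n k N hN, iter_key m k N hN]
  ring
end

section
/- For every integer n, every natural number k, every natural number j with j < k, and every positive integer N: T^j(N) is odd if and only if F_n^j(N + A_n) is even; consequently the parity vector (i_0(N), …, i_{k-1}(N)) of the Collatz sequence equals the vector (f_{n,0}(N + A_n), …, f_{n,k-1}(N + A_n)), where i_j(N) = 1 if T^j(N) is odd and 0 otherwise, and f_{n,j}(P) = 1 if F_n^j(P) is even and 0 otherwise. -/
/-- Parity indicator of the Collatz sequence: 1 if `T^[j] N` is odd, else 0. -/
def iInd (j : ℕ) (N : ℤ) : ℕ := if Odd (T^[j] N) then 1 else 0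

/-- Parity indicator for `F n`: 1 if `(F n)^[j] P` is even, else 0. -/
def fInd (n : ℤ) (j : ℕ) (P : ℤ) : ℕ := if Even ((F n)^[j] P) then 1 else 0

/-! Translation by the odd number `A n` flips parity and conjugates `T` into `F n`, so the
`F n`-orbit of `N + A n` is the `T`-orbit of `N` shifted by `A n`, with every parity reversed. -/

lemma odd_A (n : ℤ) : Odd (A n) := ⟨n, rfl⟩

lemma even_add_A_iff (n M : ℤ) : Even (M + A n) ↔ Odd M := by
  simp [Int.even_add', odd_A]

lemma F_add_A (n M : ℤ) : F n (M + A n) = T M + A n := by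
  rcases Int.even_or_odd' M with ⟨m, rfl | rfl⟩
  · have hodd : ¬Even (2 * m + A n) := by simp [even_add_A_iff]
    simp only [F, T, A] at hodd ⊢
    simp only [hodd, even_two_mul, if_false, if_true]
    omega
  · have heven : Even (2 * m + 1 + A n) := by simp [even_add_A_iff]
    have hodd : ¬Even (2 * m + 1) := by simp
    simp only [F, T, A] at heven hodd ⊢
    simp only [heven, hodd, if_false, if_true]
    omega

lemma semiconj_add_A (n : ℤ) : Function.Semiconj (· + A n) T (F n) :=
  fun M => (F_add_A n M).symm

lemma iterate_F_add_A (n M : ℤ) (j : ℕ) : (F n)^[j] (M + A n) = T^[j] M + A n :=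
  ((semiconj_add_A n).iterate_right j M).symm

theorem stmt_19_general (n : ℤ) (k : ℕ) (N : ℤ) :
    (∀ j : ℕ, j < k → (Odd (T^[j] N) ↔ Even ((F n)^[j] (N + A n)))) ∧
    (fun j : Fin k => iInd j N) = (fun j : Fin k => fInd n j (N + A n)) := by
  have parity_flip (j : ℕ) : Odd (T^[j] N) ↔ Even ((F n)^[j] (N + A n)) := by
    rw [iterate_F_add_A, even_add_A_iff]
  refine ⟨fun j _ => parity_flip j, ?_⟩
  funext j
  simp only [iInd, fInd, parity_flip]

theorem stmt_19 (n : ℤ) (k : ℕ) (N : ℤ) (hN : 0 < N) :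
    (∀ j : ℕ, j < k → (Odd (T^[j] N) ↔ Even ((F n)^[j] (N + A n)))) ∧
    (fun j : Fin k => iInd j N) = (fun j : Fin k => fInd n j (N + A n)) :=
  stmt_19_general n k N
end
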